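/- arXiv:math-ph/0305016 — 2 statements merged into one kernel-verified Lean document; each statement's English description precedes it below -/
import Mathlib

section
/- (Efron-type monotonicity for lattice variables.) Let V₁, …, V_ℓ be independent ℤ₊-valued LC random variables, each of whose support is an interval of ℤ₊ containing 0, and let S_ℓ = Σ_{i=1}^ℓ V_i. Let φ : ℤ₊^ℓ → ℝ be bounded and nondecreasing in each coordinate. Then for every integer s such that P(S_ℓ = s) > 0 and P(S_ℓ = s+1) > 0, one has E(φ(V₁, …, V_ℓ) | S_ℓ = s) ≤ E(φ(V₁, …, V_ℓ) | S_ℓ = s+1). -/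
/-- Normalising constant `P(S_ℓ = s) = Σ_{k : Σᵢ kᵢ = s} Πᵢ pᵢ(kᵢ)` for independent
`ℤ₊`-valued variables with mass functions `p i`. -/
noncomputable def condZ (ℓ s : ℕ) (p : Fin ℓ → ℕ → ℝ) : ℝ :=
  ∑ k ∈ Finset.Nat.antidiagonalTuple ℓ s, ∏ i, p i (k i)

/-- Conditional expectation `E(φ(V₁,…,V_ℓ) | S_ℓ = s)`. -/
noncomputable def condExp (ℓ s : ℕ) (p : Fin ℓ → ℕ → ℝ) (φ : (Fin ℓ → ℕ) → ℝ) : ℝ :=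
  (∑ k ∈ Finset.Nat.antidiagonalTuple ℓ s, (∏ i, p i (k i)) * φ k) / condZ ℓ s p


open Finset

def TP2N (f : ℕ → ℝ) : Prop := ∀ i j : ℕ, i ≤ j → f i * f (j+1) ≤ f (i+1) * f j

lemma sum_antidiagonalTuple_succ {ℓ : ℕ} (f : (Fin (ℓ+1) → ℕ) → ℝ) (n : ℕ) :
    ∑ k ∈ Finset.Nat.antidiagonalTuple (ℓ+1) n, f k
      = ∑ x ∈ Finset.range (n+1), ∑ k ∈ Finset.Nat.antidiagonalTuple ℓ (n - x), f (Fin.cons x k) := by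
  rw [← Finset.Nat.sum_antidiagonal_eq_sum_range_succ (fun a b => ∑ k ∈ Finset.Nat.antidiagonalTuple ℓ b, f (Fin.cons a k)), Finset.sum_sigma']
  refine Finset.sum_nbij'
    (i := fun (k : Fin (ℓ+1) → ℕ) => (⟨(k 0, ∑ i, Fin.tail k i), Fin.tail k⟩ :
      Σ _ij : ℕ × ℕ, Fin ℓ → ℕ))
    (j := fun x => Fin.cons x.1.1 x.2) ?_ ?_ ?_ ?_ ?_
  · intro k h
    simp only [Finset.Nat.mem_antidiagonalTuple] at h
    simp only [Finset.mem_sigma, Finset.mem_antidiagonal, Finset.Nat.mem_antidiagonalTuple]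
    refine ⟨?_, trivial⟩
    rw [← h, Fin.sum_univ_succ]
    simp [Fin.tail]
  · rintro ⟨⟨a,b⟩, k⟩ h
    simp only [Finset.mem_sigma, Finset.HasAntidiagonal.mem_antidiagonal, Finset.Nat.mem_antidiagonalTuple] at h
    simp only [Finset.Nat.mem_antidiagonalTuple, Fin.sum_cons, h.2, h.1]
  · intro k h
    exact Fin.cons_self_tail k
  · rintro ⟨⟨a,b⟩, k⟩ h
    simp only [Finset.mem_sigma, Finset.mem_antidiagonal, Finset.Nat.mem_antidiagonalTuple] at h
    ext : 1
    · simp [Fin.cons_zero, Fin.tail_cons, h.2]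
    · simp [Fin.tail_cons]
  · intro k h
    simp only []
    rw [Fin.cons_self_tail]


noncomputable def extZ (f : ℕ → ℝ) : ℤ → ℝ := fun z => if 0 ≤ z then f z.toNat else 0

def TP2Z (F : ℤ → ℝ) : Prop := ∀ i j : ℤ, i ≤ j → F i * F (j+1) ≤ F (i+1) * F j

lemma extZ_nonneg {f : ℕ → ℝ} (hf : ∀ n, 0 ≤ f n) : ∀ z, 0 ≤ extZ f z := by
  intro z; unfold extZ; split <;> simp [hf]

lemma extZ_neg (f : ℕ → ℝ) {z : ℤ} (h : z < 0) : extZ f z = 0 := by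
  unfold extZ; rw [if_neg (by omega)]

lemma extZ_ofNat (f : ℕ → ℝ) (n : ℕ) : extZ f (n : ℤ) = f n := by
  unfold extZ; rw [if_pos (by positivity)]; simp

lemma tp2z_extZ {f : ℕ → ℝ} (hf : ∀ n, 0 ≤ f n) (h : TP2N f) : TP2Z (extZ f) := by
  intro i j hij
  rcases lt_or_ge i 0 with hi | hi
  · rw [extZ_neg f hi, zero_mul]
    exact mul_nonneg (extZ_nonneg hf _) (extZ_nonneg hf _)
  · have hj : 0 ≤ j := le_trans hi hij
    lift i to ℕ using hi
    lift j to ℕ using hj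
    rw [show (i:ℤ)+1 = ((i+1:ℕ):ℤ) by push_cast; ring,
        show (j:ℤ)+1 = ((j+1:ℕ):ℤ) by push_cast; ring,
        extZ_ofNat, extZ_ofNat, extZ_ofNat, extZ_ofNat]
    exact h i j (by exact_mod_cast hij)

lemma tp2z_spread {F : ℤ → ℝ} (h : TP2Z F) :
    ∀ (d : ℕ) (i j : ℤ), i ≤ j → F (i - d) * F (j + d) ≤ F i * F j := by
  intro d
  induction d with
  | zero => intro i j _; simp
  | succ d ih =>
    intro i j hij
    have h1 : F (i - (d+1 : ℕ)) * F ((j + d) + 1) ≤ F ((i - (d+1:ℕ)) + 1) * F (j + d) :=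
      h _ _ (by push_cast; omega)
    calc F (i - (d+1:ℕ)) * F (j + (d+1:ℕ)) ≤ F (i - d) * F (j + d) := by
          have e1 : (i - (d+1:ℕ)) + 1 = i - d := by push_cast; ring
          have e2 : j + (d+1:ℕ) = (j + d) + 1 := by push_cast; ring
          rw [e2, ← e1]; exact h1
      _ ≤ F i * F j := ih i j hij

lemma tp2z_quad {F : ℤ → ℝ} (h : TP2Z F) (a b c d : ℤ)
    (hsum : a + b = c + d) (hac : a ≤ c) (had : a ≤ d) : F a * F b ≤ F c * F d := by
  rcases le_total c d with h1 | h1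
  · have := tp2z_spread h (c - a).toNat c d h1
    rw [show c - ((c-a).toNat : ℤ) = a by omega, show d + ((c-a).toNat : ℤ) = b by omega] at this
    exact this
  · have := tp2z_spread h (d - a).toNat d c h1
    rw [show d - ((d-a).toNat : ℤ) = a by omega, show c + ((d-a).toNat : ℤ) = b by omega] at this
    calc F a * F b = F a * F b := rfl
      _ ≤ F d * F c := this
      _ = F c * F d := mul_comm _ _

noncomputable def convZ (F G : ℤ → ℝ) : ℤ → ℝ := fun r => ∑ k ∈ Finset.Icc (0:ℤ) r, F k * G (r - k)

lemma convZ_eq_sum {F G : ℤ → ℝ} (hFneg : ∀ z < (0:ℤ), F z = 0) (hGneg : ∀ z < (0:ℤ), G z = 0)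
    (r : ℤ) {R : Finset ℤ} (hR : Finset.Icc (0:ℤ) r ⊆ R) :
    convZ F G r = ∑ k ∈ R, F k * G (r - k) := by
  refine Finset.sum_subset hR ?_
  intro k _ hk
  rw [Finset.mem_Icc] at hk
  push_neg at hk
  rcases lt_or_ge k 0 with h | h
  · rw [hFneg k h, zero_mul]
  · rw [hGneg (r - k) (by have := hk h; omega), mul_zero]

lemma convZ_nonneg {F G : ℤ → ℝ} (hF0 : ∀ z, 0 ≤ F z) (hG0 : ∀ z, 0 ≤ G z) (r : ℤ) :
    0 ≤ convZ F G r :=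
  Finset.sum_nonneg fun k _ => mul_nonneg (hF0 k) (hG0 _)

lemma convZ_neg (F G : ℤ → ℝ) {r : ℤ} (h : r < 0) : convZ F G r = 0 := by
  unfold convZ
  rw [Finset.Icc_eq_empty (by omega), Finset.sum_empty]

lemma convZ_tp2 {F G : ℤ → ℝ} (hF0 : ∀ z, 0 ≤ F z) (hG0 : ∀ z, 0 ≤ G z)
    (hFneg : ∀ z < (0:ℤ), F z = 0) (hGneg : ∀ z < (0:ℤ), G z = 0)
    (hF : TP2Z F) (hG : TP2Z G) : TP2Z (convZ F G) := by
  intro m n hmn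
  set R : Finset ℤ := Finset.Icc (-1) (n+2) with hRdef
  have h1 : convZ F G (m+1) = ∑ k ∈ R, F k * G (m+1-k) :=
    convZ_eq_sum hFneg hGneg _ (Finset.Icc_subset_Icc (by omega) (by omega))
  have h2 : convZ F G (n+1) = ∑ k ∈ R, F k * G (n+1-k) :=
    convZ_eq_sum hFneg hGneg _ (Finset.Icc_subset_Icc (by omega) (by omega))
  -- shifted representations
  have hshift : ∀ r : ℤ, r ≤ n+1 → convZ F G r = ∑ k ∈ R, F (k-1) * G (r+1-k) := by
    intro r hr
    rw [convZ_eq_sum hFneg hGneg r (R := Finset.Icc (-2) (n+1))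
        (Finset.Icc_subset_Icc (by omega) (by omega))]
    refine Finset.sum_nbij' (i := fun k => k + 1) (j := fun k => k - 1) ?_ ?_ ?_ ?_ ?_
    · intro k hk; rw [Finset.mem_Icc] at hk ⊢; omega
    · intro k hk; rw [Finset.mem_Icc] at hk ⊢; omega
    · intro k _; ring
    · intro k _; ring
    · intro k _
      rw [show k + 1 - 1 = k by ring, show r + 1 - (k + 1) = r - k by ring]
  have h3 : convZ F G m = ∑ k ∈ R, F (k-1) * G (m+1-k) := hshift m (by omega)
  have h4 : convZ F G n = ∑ k ∈ R, F (k-1) * G (n+1-k) := hshift n (by omega)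
  have hswap : ∀ f : ℤ → ℤ → ℝ, ∑ k ∈ R, ∑ k' ∈ R, f k k' = ∑ k ∈ R, ∑ k' ∈ R, f k' k :=
    fun f => Finset.sum_comm
  have e1 : convZ F G (m+1) * convZ F G n - convZ F G m * convZ F G (n+1)
      = ∑ k ∈ R, ∑ k' ∈ R,
        (F k * G (m+1-k) * (F (k'-1) * G (n+1-k')) - F (k-1) * G (m+1-k) * (F k' * G (n+1-k'))) := by
    rw [h1, h2, h3, h4, Finset.sum_mul_sum, Finset.sum_mul_sum, ← Finset.sum_sub_distrib]
    refine Finset.sum_congr rfl fun k _ => ?_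
    rw [← Finset.sum_sub_distrib]
  have key : 2 * (convZ F G (m+1) * convZ F G n - convZ F G m * convZ F G (n+1))
      = ∑ k ∈ R, ∑ k' ∈ R,
        (F k * F (k'-1) - F (k-1) * F k') * (G (m+1-k) * G (n+1-k') - G (m+1-k') * G (n+1-k)) := by
    have e2 : convZ F G (m+1) * convZ F G n - convZ F G m * convZ F G (n+1)
        = ∑ k ∈ R, ∑ k' ∈ R,
          (F k' * G (m+1-k') * (F (k-1) * G (n+1-k)) - F (k'-1) * G (m+1-k') * (F k * G (n+1-k))) := by
      rw [e1]
      exact hswap _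
    calc 2 * (convZ F G (m+1) * convZ F G n - convZ F G m * convZ F G (n+1))
        = (convZ F G (m+1) * convZ F G n - convZ F G m * convZ F G (n+1))
          + (convZ F G (m+1) * convZ F G n - convZ F G m * convZ F G (n+1)) := by ring
      _ = (∑ k ∈ R, ∑ k' ∈ R,
          (F k * G (m+1-k) * (F (k'-1) * G (n+1-k')) - F (k-1) * G (m+1-k) * (F k' * G (n+1-k'))))
          + ∑ k ∈ R, ∑ k' ∈ R,
          (F k' * G (m+1-k') * (F (k-1) * G (n+1-k)) - F (k'-1) * G (m+1-k') * (F k * G (n+1-k))) :=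
        congrArg₂ (· + ·) e1 e2
      _ = ∑ k ∈ R, ∑ k' ∈ R,
          ((F k * G (m+1-k) * (F (k'-1) * G (n+1-k')) - F (k-1) * G (m+1-k) * (F k' * G (n+1-k')))
          + (F k' * G (m+1-k') * (F (k-1) * G (n+1-k)) - F (k'-1) * G (m+1-k') * (F k * G (n+1-k)))) := by
        rw [← Finset.sum_add_distrib]
        refine Finset.sum_congr rfl fun k _ => ?_
        rw [← Finset.sum_add_distrib]
      _ = _ := by
        refine Finset.sum_congr rfl fun k _ => Finset.sum_congr rfl fun k' _ => ?_
        ring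
  have hnn : (0:ℝ) ≤ ∑ k ∈ R, ∑ k' ∈ R,
      (F k * F (k'-1) - F (k-1) * F k') * (G (m+1-k) * G (n+1-k') - G (m+1-k') * G (n+1-k)) := by
    refine Finset.sum_nonneg fun k _ => Finset.sum_nonneg fun k' _ => ?_
    rcases le_total k k' with hkk | hkk
    · have d1 : F (k-1) * F k' ≤ F k * F (k'-1) := by
        have := hF (k-1) (k'-1) (by omega)
        rw [show k-1+1 = k by ring, show k'-1+1 = k' by ring] at this
        exact this
      have d2 : G (m+1-k') * G (n+1-k) ≤ G (m+1-k) * G (n+1-k') :=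
        tp2z_quad hG _ _ _ _ (by ring) (by omega) (by omega)
      nlinarith
    · have d1 : F (k'-1) * F k ≤ F k' * F (k-1) := by
        have := hF (k'-1) (k-1) (by omega)
        rw [show k-1+1 = k by ring, show k'-1+1 = k' by ring] at this
        exact this
      have d2 : G (m+1-k) * G (n+1-k') ≤ G (m+1-k') * G (n+1-k) :=
        tp2z_quad hG _ _ _ _ (by ring) (by omega) (by omega)
      nlinarith
  linarith [key ▸ hnn]

lemma tp2n_of_lc (p : ℕ → ℝ) (hp0 : ∀ s, 0 ≤ p s)
    (hlc : ∀ s : ℕ, 1 ≤ s → p s ^ 2 ≥ p (s-1) * p (s+1))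
    (hint : ∀ s t : ℕ, t ≤ s → 0 < p s → 0 < p t) : TP2N p := by
  intro i j hij
  rcases eq_or_lt_of_le (hp0 (j+1)) with h0 | hpos
  · rw [← h0, mul_zero]; exact mul_nonneg (hp0 _) (hp0 _)
  have hall : ∀ k, k ≤ j + 1 → 0 < p k := fun k hk => hint (j+1) k hk hpos
  have main : ∀ d i, i + d = j → p i * p (j+1) ≤ p (i+1) * p j := by
    intro d
    induction d with
    | zero =>
      intro i h
      obtain rfl : i = j := by omega
      exact (mul_comm _ _).le
    | succ d ih =>
      intro i h
      have h1 := ih (i+1) (by omega)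
      have h2 : p i * p (i+2) ≤ p (i+1) ^ 2 := by
        have := hlc (i+1) (by omega)
        simpa using this
      have hb : 0 < p (i+1) := hall (i+1) (by omega)
      have e1 : p i * (p (i+1) * p (j+1)) ≤ p i * (p (i+1+1) * p j) :=
        mul_le_mul_of_nonneg_left h1 (hp0 i)
      have e2 : p i * p (i+2) * p j ≤ p (i+1)^2 * p j :=
        mul_le_mul_of_nonneg_right h2 (hp0 j)
      have e3 : p (i+1) * (p i * p (j+1)) ≤ p (i+1) * (p (i+1) * p j) := by
        have : i + 1 + 1 = i + 2 := by ring
        rw [this] at e1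
        nlinarith
      exact le_of_mul_le_mul_left e3 hb
  exact main (j - i) i (by omega)

lemma sum_Icc_int_eq (f : ℤ → ℝ) (n : ℕ) :
    ∑ k ∈ Finset.Icc (0:ℤ) (n:ℤ), f k = ∑ x ∈ Finset.range (n+1), f (x:ℤ) := by
  refine Finset.sum_nbij' (i := fun k => k.toNat) (j := fun x => (x:ℤ)) ?_ ?_ ?_ ?_ ?_
  · intro k hk; rw [Finset.mem_Icc] at hk; rw [Finset.mem_range]; omega
  · intro x hx; rw [Finset.mem_range] at hx; rw [Finset.mem_Icc]; omega
  · intro k hk; rw [Finset.mem_Icc] at hk; omega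
  · intro x _; simp
  · intro k hk; rw [Finset.mem_Icc] at hk; congr 1; omega

lemma condZ_nonneg (ℓ s : ℕ) (p : Fin ℓ → ℕ → ℝ) (hp0 : ∀ i t, 0 ≤ p i t) :
    0 ≤ condZ ℓ s p :=
  Finset.sum_nonneg fun k _ => Finset.prod_nonneg fun i _ => hp0 i _

lemma condZ_zero_succ (s : ℕ) (p : Fin 0 → ℕ → ℝ) : condZ 0 (s+1) p = 0 := by
  simp [condZ]

lemma condZ_succ (ℓ s : ℕ) (p : Fin (ℓ+1) → ℕ → ℝ) :
    condZ (ℓ+1) s p = ∑ x ∈ Finset.range (s+1), p 0 x * condZ ℓ (s-x) (Fin.tail p) := by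
  unfold condZ
  rw [sum_antidiagonalTuple_succ (fun k => ∏ i, p i (k i)) s]
  refine Finset.sum_congr rfl fun x _ => ?_
  rw [Finset.mul_sum]
  refine Finset.sum_congr rfl fun k _ => ?_
  rw [Fin.prod_univ_succ]
  congr 1

lemma extZ_condZ_succ (ℓ : ℕ) (p : Fin (ℓ+1) → ℕ → ℝ) :
    extZ (fun t => condZ (ℓ+1) t p)
      = convZ (extZ (p 0)) (extZ (fun t => condZ ℓ t (Fin.tail p))) := by
  funext r
  rcases lt_or_ge r 0 with h | h
  · rw [extZ_neg _ h, convZ_neg _ _ h]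
  · lift r to ℕ using h
    rw [extZ_ofNat]
    unfold convZ
    rw [sum_Icc_int_eq (fun k => extZ (p 0) k * extZ (fun t => condZ ℓ t (Fin.tail p)) ((r:ℤ) - k)) r]
    rw [condZ_succ]
    refine Finset.sum_congr rfl fun x hx => ?_
    rw [Finset.mem_range] at hx
    rw [extZ_ofNat, show (r:ℤ) - (x:ℤ) = ((r - x : ℕ) : ℤ) by omega, extZ_ofNat]

lemma condZ_tp2z : ∀ (ℓ : ℕ) (p : Fin ℓ → ℕ → ℝ), (∀ i t, 0 ≤ p i t) → (∀ i, TP2N (p i)) →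
    TP2Z (extZ (fun t => condZ ℓ t p)) := by
  intro ℓ
  induction ℓ with
  | zero =>
    intro p hp0 _
    intro i j hij
    rcases lt_or_ge i 0 with hi | hi
    · rw [extZ_neg _ hi, zero_mul]
      exact mul_nonneg (extZ_nonneg (fun t => condZ_nonneg _ _ _ hp0) _)
        (extZ_nonneg (fun t => condZ_nonneg _ _ _ hp0) _)
    · have hj1 : (0:ℤ) ≤ j + 1 := by omega
      have : extZ (fun t => condZ 0 t p) (j+1) = 0 := by
        have hj : 0 ≤ j := le_trans hi hij
        lift j to ℕ using hj
        rw [show (j:ℤ)+1 = ((j+1:ℕ):ℤ) by push_cast; ring, extZ_ofNat, condZ_zero_succ]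
      rw [this, mul_zero]
      exact mul_nonneg (extZ_nonneg (fun t => condZ_nonneg _ _ _ hp0) _)
        (extZ_nonneg (fun t => condZ_nonneg _ _ _ hp0) _)
  | succ ℓ ih =>
    intro p hp0 htp2
    rw [extZ_condZ_succ]
    exact convZ_tp2 (extZ_nonneg (fun t => hp0 0 t))
      (extZ_nonneg (fun t => condZ_nonneg ℓ t (Fin.tail p) (fun i u => hp0 i.succ u)))
      (fun z hz => extZ_neg _ hz) (fun z hz => extZ_neg _ hz)
      (tp2z_extZ (fun t => hp0 0 t) (htp2 0))
      (ih (Fin.tail p) (fun i t => hp0 i.succ t) (fun i => htp2 i.succ))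

lemma tp2n_of_tp2z {f : ℕ → ℝ} (h : TP2Z (extZ f)) : TP2N f := by
  intro i j hij
  have := h i j (by exact_mod_cast hij)
  rw [show (i:ℤ)+1 = ((i+1:ℕ):ℤ) by push_cast; ring,
      show (j:ℤ)+1 = ((j+1:ℕ):ℤ) by push_cast; ring,
      extZ_ofNat, extZ_ofNat, extZ_ofNat, extZ_ofNat] at this
  exact this

lemma condZ_tp2n (ℓ : ℕ) (p : Fin ℓ → ℕ → ℝ) (hp0 : ∀ i t, 0 ≤ p i t)
    (htp2 : ∀ i, TP2N (p i)) : TP2N (fun t => condZ ℓ t p) :=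
  tp2n_of_tp2z (condZ_tp2z ℓ p hp0 htp2)

noncomputable def ind (x t : ℕ) : ℝ := if x ≤ t then 1 else 0

lemma ind_mono {x t u : ℕ} (h : u ≤ t) : ind x u ≤ ind x t := by
  unfold ind; split <;> split <;> norm_num <;> omega

lemma sum_Ico_indicator (f : ℕ → ℝ) (x N : ℕ) :
    ∑ t ∈ Finset.Ico x (N+1), f t = ∑ t ∈ Finset.range (N+1), f t * ind x t := by
  unfold ind
  simp only [mul_ite, mul_one, mul_zero]
  rw [Finset.sum_ite, Finset.sum_const_zero, add_zero]
  apply Finset.sum_congr _ (fun _ _ => rfl)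
  ext t
  simp only [Finset.mem_filter, Finset.mem_Ico, Finset.mem_range]
  omega

/-- Abstract dominance I. -/
lemma dom1_abstract (a b : ℕ → ℝ) (N x : ℕ)
    (hcross : ∀ u t, u ≤ t → a u * b t ≤ a t * b u) :
    (∑ t ∈ Finset.range (N+1), a t) * (∑ t ∈ Finset.Ico x (N+1), b t)
      ≤ (∑ t ∈ Finset.range (N+1), b t) * (∑ t ∈ Finset.Ico x (N+1), a t) := by
  set R := Finset.range (N+1) with hR
  rw [sum_Ico_indicator, sum_Ico_indicator, ← hR]
  have hswap : ∀ f : ℕ → ℕ → ℝ, ∑ k ∈ R, ∑ k' ∈ R, f k k' = ∑ k ∈ R, ∑ k' ∈ R, f k' k :=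
    fun f => Finset.sum_comm
  have e1 : (∑ t ∈ R, b t) * (∑ t ∈ R, a t * ind x t) - (∑ t ∈ R, a t) * (∑ t ∈ R, b t * ind x t)
      = ∑ t ∈ R, ∑ u ∈ R, (b t * (a u * ind x u) - a t * (b u * ind x u)) := by
    rw [Finset.sum_mul_sum, Finset.sum_mul_sum, ← Finset.sum_sub_distrib]
    exact Finset.sum_congr rfl fun t _ => by rw [← Finset.sum_sub_distrib]
  have e2 : (∑ t ∈ R, b t) * (∑ t ∈ R, a t * ind x t) - (∑ t ∈ R, a t) * (∑ t ∈ R, b t * ind x t)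
      = ∑ t ∈ R, ∑ u ∈ R, (b u * (a t * ind x t) - a u * (b t * ind x t)) := by
    rw [e1]; exact hswap _
  have key : 2 * ((∑ t ∈ R, b t) * (∑ t ∈ R, a t * ind x t)
        - (∑ t ∈ R, a t) * (∑ t ∈ R, b t * ind x t))
      = ∑ t ∈ R, ∑ u ∈ R, (a u * b t - a t * b u) * (ind x u - ind x t) := by
    calc 2 * ((∑ t ∈ R, b t) * (∑ t ∈ R, a t * ind x t)
          - (∑ t ∈ R, a t) * (∑ t ∈ R, b t * ind x t))
        = ((∑ t ∈ R, b t) * (∑ t ∈ R, a t * ind x t)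
            - (∑ t ∈ R, a t) * (∑ t ∈ R, b t * ind x t))
          + ((∑ t ∈ R, b t) * (∑ t ∈ R, a t * ind x t)
            - (∑ t ∈ R, a t) * (∑ t ∈ R, b t * ind x t)) := by ring
      _ = (∑ t ∈ R, ∑ u ∈ R, (b t * (a u * ind x u) - a t * (b u * ind x u)))
          + ∑ t ∈ R, ∑ u ∈ R, (b u * (a t * ind x t) - a u * (b t * ind x t)) :=
        congrArg₂ (· + ·) e1 e2
      _ = ∑ t ∈ R, ∑ u ∈ R, ((b t * (a u * ind x u) - a t * (b u * ind x u))
          + (b u * (a t * ind x t) - a u * (b t * ind x t))) := by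
        rw [← Finset.sum_add_distrib]
        exact Finset.sum_congr rfl fun t _ => by rw [← Finset.sum_add_distrib]
      _ = _ := Finset.sum_congr rfl fun t _ => Finset.sum_congr rfl fun u _ => by ring
  have hnn : (0:ℝ) ≤ ∑ t ∈ R, ∑ u ∈ R, (a u * b t - a t * b u) * (ind x u - ind x t) := by
    refine Finset.sum_nonneg fun t _ => Finset.sum_nonneg fun u _ => ?_
    rcases le_total u t with h | h
    · nlinarith [hcross u t h, ind_mono (x := x) h]
    · nlinarith [hcross t u h, ind_mono (x := x) h]
  linarith [key ▸ hnn]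

lemma dom2_concrete (p q : ℕ → ℝ) (hp : ∀ t, 0 ≤ p t) (hq : ∀ t, 0 ≤ q t)
    (hp2 : TP2N p) (s x : ℕ) :
    (∑ u ∈ Finset.range (s+1), p u * q (s-u)) * (∑ t ∈ Finset.Ico (x+1) (s+2), p t * q (s+1-t))
      ≤ (∑ t ∈ Finset.range (s+2), p t * q (s+1-t)) * (∑ u ∈ Finset.Ico x (s+1), p u * q (s-u)) := by
  rcases le_or_gt x s with hx | hx
  swap
  · rw [Finset.Ico_eq_empty (by omega), Finset.sum_empty, mul_zero]
    exact mul_nonneg (Finset.sum_nonneg fun t _ => mul_nonneg (hp _) (hq _))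
      (Finset.sum_nonneg fun u _ => mul_nonneg (hp _) (hq _))
  have hsplit1 : ∑ u ∈ Finset.range (s+1), p u * q (s-u)
      = (∑ u ∈ Finset.Ico 0 x, p u * q (s-u)) + ∑ u ∈ Finset.Ico x (s+1), p u * q (s-u) := by
    rw [Finset.range_eq_Ico, ← Finset.sum_Ico_consecutive _ (by omega : 0 ≤ x) (by omega : x ≤ s+1)]
  have hsplit2 : ∑ t ∈ Finset.range (s+2), p t * q (s+1-t)
      = (∑ t ∈ Finset.Ico 0 (x+1), p t * q (s+1-t))
        + ∑ t ∈ Finset.Ico (x+1) (s+2), p t * q (s+1-t) := by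
    rw [Finset.range_eq_Ico,
      ← Finset.sum_Ico_consecutive _ (by omega : 0 ≤ x+1) (by omega : x+1 ≤ s+2)]
  set A1 := ∑ t ∈ Finset.Ico (x+1) (s+2), p t * q (s+1-t) with hA1
  set A0 := ∑ t ∈ Finset.Ico 0 (x+1), p t * q (s+1-t) with hA0
  set B0 := ∑ u ∈ Finset.Ico 0 x, p u * q (s-u) with hB0
  set B1 := ∑ u ∈ Finset.Ico x (s+1), p u * q (s-u) with hB1
  rw [hsplit1, hsplit2]
  have hmain : B0 * A1 ≤ A0 * B1 := by
    have step1 : B0 * A1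
        = ∑ tu ∈ (Finset.Ico (x+1) (s+2)) ×ˢ (Finset.Ico 0 x),
            p tu.1 * q (s+1-tu.1) * (p tu.2 * q (s-tu.2)) := by
      rw [Finset.sum_product]
      rw [hB0, hA1, mul_comm, Finset.sum_mul_sum]
    have step2 : ∀ tu ∈ (Finset.Ico (x+1) (s+2)) ×ˢ (Finset.Ico 0 x),
        p tu.1 * q (s+1-tu.1) * (p tu.2 * q (s-tu.2))
          ≤ p (tu.2+1) * q (s+1-(tu.2+1)) * (p (tu.1-1) * q (s-(tu.1-1))) := by
      rintro ⟨t, u⟩ htu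
      rw [Finset.mem_product, Finset.mem_Ico, Finset.mem_Ico] at htu
      obtain ⟨⟨ht1, ht2⟩, _, hu2⟩ := htu
      dsimp only
      have h := hp2 u (t-1) (by omega)
      rw [show t-1+1 = t by omega] at h
      rw [show s+1-(u+1) = s-u by omega, show s-(t-1) = s+1-t by omega]
      calc p t * q (s+1-t) * (p u * q (s-u))
          = (p u * p t) * (q (s+1-t) * q (s-u)) := by ring
        _ ≤ (p (u+1) * p (t-1)) * (q (s+1-t) * q (s-u)) :=
            mul_le_mul_of_nonneg_right h (mul_nonneg (hq _) (hq _))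
        _ = p (u+1) * q (s-u) * (p (t-1) * q (s+1-t)) := by ring
    have hinj : ∀ tu ∈ (Finset.Ico (x+1) (s+2)) ×ˢ (Finset.Ico 0 x),
        ∀ tu' ∈ (Finset.Ico (x+1) (s+2)) ×ˢ (Finset.Ico 0 x),
        (fun tu : ℕ × ℕ => (tu.2+1, tu.1-1)) tu = (fun tu : ℕ × ℕ => (tu.2+1, tu.1-1)) tu'
          → tu = tu' := by
      rintro ⟨t, u⟩ h1 ⟨t', u'⟩ h2 he
      simp only [Finset.mem_product, Finset.mem_Ico] at h1 h2
      simp only [Prod.mk.injEq] at he ⊢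
      omega
    calc B0 * A1
        ≤ ∑ tu ∈ (Finset.Ico (x+1) (s+2)) ×ˢ (Finset.Ico 0 x),
            p (tu.2+1) * q (s+1-(tu.2+1)) * (p (tu.1-1) * q (s-(tu.1-1))) := by
          rw [step1]; exact Finset.sum_le_sum step2
      _ = ∑ tu ∈ ((Finset.Ico (x+1) (s+2)) ×ˢ (Finset.Ico 0 x)).image
            (fun tu : ℕ × ℕ => (tu.2+1, tu.1-1)),
            p tu.1 * q (s+1-tu.1) * (p tu.2 * q (s-tu.2)) := by
          rw [Finset.sum_image hinj]
      _ ≤ ∑ tu ∈ (Finset.Ico 0 (x+1)) ×ˢ (Finset.Ico x (s+1)),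
            p tu.1 * q (s+1-tu.1) * (p tu.2 * q (s-tu.2)) := by
          refine Finset.sum_le_sum_of_subset_of_nonneg ?_ ?_
          · intro tu htu
            rw [Finset.mem_image] at htu
            obtain ⟨⟨t, u⟩, hmem, rfl⟩ := htu
            rw [Finset.mem_product, Finset.mem_Ico, Finset.mem_Ico] at hmem ⊢
            omega
          · intro tu _ _
            exact mul_nonneg (mul_nonneg (hp _) (hq _)) (mul_nonneg (hp _) (hq _))
      _ = A0 * B1 := by
          rw [hA0, hB1, Finset.sum_mul_sum, ← Finset.sum_product']
  calc (B0 + B1) * A1 = B0 * A1 + A1 * B1 := by ring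
    _ ≤ A0 * B1 + A1 * B1 := by linarith
    _ = (A0 + A1) * B1 := by ring

lemma key_coupling (N : ℕ) (a b v u : ℕ → ℝ)
    (ha : ∀ x, 0 ≤ a x) (hb : ∀ x, 0 ≤ b x) (hbN : b N = 0)
    (hZa : 0 < ∑ x ∈ Finset.range (N+1), a x) (hZb : 0 < ∑ x ∈ Finset.range (N+1), b x)
    (hD1 : ∀ x, (∑ t ∈ Finset.range (N+1), a t) * (∑ t ∈ Finset.Ico x (N+1), b t)
      ≤ (∑ t ∈ Finset.range (N+1), b t) * (∑ t ∈ Finset.Ico x (N+1), a t))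
    (hD2 : ∀ x, (∑ t ∈ Finset.range (N+1), b t) * (∑ t ∈ Finset.Ico (x+1) (N+1), a t)
      ≤ (∑ t ∈ Finset.range (N+1), a t) * (∑ t ∈ Finset.Ico x (N+1), b t))
    (hm1 : ∀ x, 0 < a x → 0 < b x → u x ≤ v x)
    (hm2 : ∀ x, 0 < a (x+1) → 0 < b x → u x ≤ v (x+1)) :
    (∑ x ∈ Finset.range (N+1), b x * u x) / (∑ x ∈ Finset.range (N+1), b x)
      ≤ (∑ x ∈ Finset.range (N+1), a x * v x) / (∑ x ∈ Finset.range (N+1), a x) := by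
  set Za := ∑ x ∈ Finset.range (N+1), a x with hZadef
  set Zb := ∑ x ∈ Finset.range (N+1), b x with hZbdef
  set A : ℕ → ℝ := fun x => ∑ t ∈ Finset.Ico x (N+1), a t with hAdef
  set B : ℕ → ℝ := fun x => ∑ t ∈ Finset.Ico x (N+1), b t with hBdef
  have hA0 : A 0 = Za := by rw [hAdef, hZadef, Finset.range_eq_Ico]
  have hB0 : B 0 = Zb := by rw [hBdef, hZbdef, Finset.range_eq_Ico]
  have hAsucc : ∀ x, x ≤ N → A x = a x + A (x+1) := by
    intro x hx
    exact Finset.sum_eq_sum_Ico_succ_bot (by omega) a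
  have hBsucc : ∀ x, x ≤ N → B x = b x + B (x+1) := by
    intro x hx
    exact Finset.sum_eq_sum_Ico_succ_bot (by omega) b
  have hAtop : A (N+1) = 0 := by rw [hAdef]; simp
  have hBtop : B (N+1) = 0 := by rw [hBdef]; simp
  set C : ℕ → ℝ := fun x => Za * B x - Zb * A (x+1) with hCdef
  set E : ℕ → ℝ := fun x => Zb * A (x+1) - Za * B (x+1) with hEdef
  have hC : ∀ x, 0 ≤ C x := fun x => sub_nonneg.mpr (hD2 x)
  have hE : ∀ x, 0 ≤ E x := fun x => sub_nonneg.mpr (hD1 (x+1))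
  have hCa : ∀ x, x ≤ N → C x ≤ Zb * a x := by
    intro x hx
    have h1 := hD1 x
    have h2 := hAsucc x hx
    simp only [hCdef]
    have : Zb * A x = Zb * a x + Zb * A (x+1) := by rw [h2]; ring
    linarith
  have hCb : ∀ x, x ≤ N → C x ≤ Za * b x := by
    intro x hx
    have h1 := hE x
    have h2 := hBsucc x hx
    simp only [hCdef]
    have : Za * B x = Za * b x + Za * B (x+1) := by rw [h2]; ring
    simp only [hEdef] at h1
    linarith
  have hEa : ∀ x, x+1 ≤ N → E x ≤ Zb * a (x+1) := by
    intro x hx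
    have h1 := hC (x+1)
    have h2 := hAsucc (x+1) hx
    simp only [hEdef]
    simp only [hCdef] at h1
    have : Zb * A (x+1) = Zb * a (x+1) + Zb * A (x+2) := by rw [h2]; ring
    linarith
  have hEb : ∀ x, x ≤ N → E x ≤ Za * b x := by
    intro x hx
    have h1 := hD2 x
    have h2 := hBsucc x hx
    simp only [hEdef]
    have : Za * B x = Za * b x + Za * B (x+1) := by rw [h2]; ring
    linarith
  have hEN : E N = 0 := by simp only [hEdef]; rw [hAtop, hBtop]; ring
  have hC0 : C 0 = Zb * a 0 := by
    have h2 : A 0 = a 0 + A (0+1) := hAsucc 0 (by omega)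
    simp only [hCdef]
    rw [hB0, ← hA0, h2]; ring
  have hCEa : ∀ x, x+1 ≤ N → C (x+1) + E x = Zb * a (x+1) := by
    intro x hx
    simp only [hCdef, hEdef]
    have := hAsucc (x+1) hx
    rw [this]; ring
  have hCEb : ∀ x, x ≤ N → C x + E x = Za * b x := by
    intro x hx
    simp only [hCdef, hEdef]
    have := hBsucc x hx
    rw [this]; ring
  -- the two nonnegative "coupling" sums
  have hS1 : 0 ≤ ∑ x ∈ Finset.range (N+1), C x * (v x - u x) := by
    refine Finset.sum_nonneg fun x hx => ?_
    rw [Finset.mem_range] at hx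
    rcases (hC x).eq_or_lt with h | h
    · rw [← h, zero_mul]
    · have hax : 0 < a x := by
        rcases (ha x).eq_or_lt with h2 | h2
        · exfalso
          have := hCa x (by omega)
          rw [← h2, mul_zero] at this
          linarith
        · exact h2
      have hbx : 0 < b x := by
        rcases (hb x).eq_or_lt with h2 | h2
        · exfalso
          have := hCb x (by omega)
          rw [← h2, mul_zero] at this
          linarith
        · exact h2
      exact mul_nonneg (hC x) (sub_nonneg.mpr (hm1 x hax hbx))
  have hS2 : 0 ≤ ∑ x ∈ Finset.range N, E x * (v (x+1) - u x) := by
    refine Finset.sum_nonneg fun x hx => ?_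
    rw [Finset.mem_range] at hx
    rcases (hE x).eq_or_lt with h | h
    · rw [← h, zero_mul]
    · have hax : 0 < a (x+1) := by
        rcases (ha (x+1)).eq_or_lt with h2 | h2
        · exfalso
          have := hEa x (by omega)
          rw [← h2, mul_zero] at this
          linarith
        · exact h2
      have hbx : 0 < b x := by
        rcases (hb x).eq_or_lt with h2 | h2
        · exfalso
          have := hEb x (by omega)
          rw [← h2, mul_zero] at this
          linarith
        · exact h2
      exact mul_nonneg (hE x) (sub_nonneg.mpr (hm2 x hax hbx))
  -- identity
  have h1 : Zb * (∑ x ∈ Finset.range (N+1), a x * v x)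
      = ∑ x ∈ Finset.range (N+1), (Zb * a x) * v x := by
    rw [Finset.mul_sum]
    exact Finset.sum_congr rfl fun x _ => by ring
  have h2 : ∑ x ∈ Finset.range (N+1), (Zb * a x) * v x
      = (∑ x ∈ Finset.range N, (Zb * a (x+1)) * v (x+1)) + (Zb * a 0) * v 0 :=
    Finset.sum_range_succ' _ N
  have h3 : ∑ x ∈ Finset.range N, (Zb * a (x+1)) * v (x+1)
      = ∑ x ∈ Finset.range N, (C (x+1) * v (x+1) + E x * v (x+1)) := by
    refine Finset.sum_congr rfl fun x hx => ?_
    rw [Finset.mem_range] at hx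
    rw [← hCEa x (by omega)]; ring
  have h4 : ∑ x ∈ Finset.range N, (C (x+1) * v (x+1) + E x * v (x+1))
      = (∑ x ∈ Finset.range N, C (x+1) * v (x+1)) + ∑ x ∈ Finset.range N, E x * v (x+1) :=
    Finset.sum_add_distrib
  have h5 : ∑ x ∈ Finset.range (N+1), C x * v x
      = (∑ x ∈ Finset.range N, C (x+1) * v (x+1)) + C 0 * v 0 :=
    Finset.sum_range_succ' _ N
  have h6 : (Zb * a 0) * v 0 = C 0 * v 0 := by rw [hC0]
  have g1 : Za * (∑ x ∈ Finset.range (N+1), b x * u x)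
      = ∑ x ∈ Finset.range (N+1), (Za * b x) * u x := by
    rw [Finset.mul_sum]
    exact Finset.sum_congr rfl fun x _ => by ring
  have g2 : ∑ x ∈ Finset.range (N+1), (Za * b x) * u x
      = ∑ x ∈ Finset.range (N+1), (C x * u x + E x * u x) := by
    refine Finset.sum_congr rfl fun x hx => ?_
    rw [Finset.mem_range] at hx
    rw [← hCEb x (by omega)]; ring
  have g3 : ∑ x ∈ Finset.range (N+1), (C x * u x + E x * u x)
      = (∑ x ∈ Finset.range (N+1), C x * u x) + ∑ x ∈ Finset.range (N+1), E x * u x :=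
    Finset.sum_add_distrib
  have g4 : ∑ x ∈ Finset.range (N+1), E x * u x
      = (∑ x ∈ Finset.range N, E x * u x) + E N * u N :=
    Finset.sum_range_succ _ N
  have g5 : E N * u N = 0 := by rw [hEN, zero_mul]
  have s1e : ∑ x ∈ Finset.range (N+1), C x * (v x - u x)
      = (∑ x ∈ Finset.range (N+1), C x * v x) - ∑ x ∈ Finset.range (N+1), C x * u x := by
    rw [← Finset.sum_sub_distrib]
    exact Finset.sum_congr rfl fun x _ => by ring
  have s2e : ∑ x ∈ Finset.range N, E x * (v (x+1) - u x)
      = (∑ x ∈ Finset.range N, E x * v (x+1)) - ∑ x ∈ Finset.range N, E x * u x := by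
    rw [← Finset.sum_sub_distrib]
    exact Finset.sum_congr rfl fun x _ => by ring
  rw [div_le_div_iff₀ hZb hZa]
  have final : Za * (∑ x ∈ Finset.range (N+1), b x * u x)
      ≤ Zb * (∑ x ∈ Finset.range (N+1), a x * v x) := by
    linarith [hS1, hS2, h1, h2, h3, h4, h5, h6, g1, g2, g3, g4, g5, s1e, s2e]
  linarith [final, mul_comm Za (∑ x ∈ Finset.range (N+1), b x * u x),
    mul_comm Zb (∑ x ∈ Finset.range (N+1), a x * v x)]

noncomputable def numer (ℓ s : ℕ) (p : Fin ℓ → ℕ → ℝ) (φ : (Fin ℓ → ℕ) → ℝ) : ℝ :=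
  ∑ k ∈ Finset.Nat.antidiagonalTuple ℓ s, (∏ i, p i (k i)) * φ k

lemma condExp_eq (ℓ s : ℕ) (p : Fin ℓ → ℕ → ℝ) (φ : (Fin ℓ → ℕ) → ℝ) :
    condExp ℓ s p φ = numer ℓ s p φ / condZ ℓ s p := rfl

lemma numer_succ (ℓ s : ℕ) (p : Fin (ℓ+1) → ℕ → ℝ) (φ : (Fin (ℓ+1) → ℕ) → ℝ) :
    numer (ℓ+1) s p φ
      = ∑ x ∈ Finset.range (s+1), p 0 x * numer ℓ (s-x) (Fin.tail p) (fun k => φ (Fin.cons x k)) := by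
  unfold numer
  rw [sum_antidiagonalTuple_succ (fun k => (∏ i, p i (k i)) * φ k) s]
  refine Finset.sum_congr rfl fun x _ => ?_
  rw [Finset.mul_sum]
  refine Finset.sum_congr rfl fun k _ => ?_
  rw [Fin.prod_univ_succ]
  rw [show ((Fin.cons x k : Fin (ℓ+1) → ℕ) 0) = x from rfl]
  rw [show (∏ i : Fin ℓ, p i.succ ((Fin.cons x k : Fin (ℓ+1) → ℕ) i.succ))
      = ∏ i : Fin ℓ, Fin.tail p i (k i) from
    Finset.prod_congr rfl fun i _ => by rw [Fin.cons_succ]; rfl]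
  ring

lemma numer_vanish (ℓ s : ℕ) (p : Fin ℓ → ℕ → ℝ) (φ : (Fin ℓ → ℕ) → ℝ)
    (hp0 : ∀ i t, 0 ≤ p i t) (hZ : condZ ℓ s p = 0) : numer ℓ s p φ = 0 := by
  have hall := (Finset.sum_eq_zero_iff_of_nonneg
    (fun k _ => Finset.prod_nonneg fun i _ => hp0 i _)).mp hZ
  exact Finset.sum_eq_zero fun k hk => by rw [hall k hk, zero_mul]

lemma cancel_helper (c z n : ℝ) (hz : 0 ≤ z) (hvan : z = 0 → n = 0) :
    (c * z) * (n / z) = c * n := by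
  rcases eq_or_lt_of_le hz with h | h
  · rw [← h, mul_zero, zero_mul, hvan h.symm, mul_zero]
  · field_simp

lemma master : ∀ (ℓ : ℕ) (p : Fin ℓ → ℕ → ℝ), (∀ i t, 0 ≤ p i t) → (∀ i, TP2N (p i)) →
    ∀ (φ : (Fin ℓ → ℕ) → ℝ), Monotone φ → ∀ s, 0 < condZ ℓ s p → 0 < condZ ℓ (s+1) p →
    condExp ℓ s p φ ≤ condExp ℓ (s+1) p φ := by
  intro ℓ
  induction ℓ with
  | zero =>
    intro p _ _ φ _ s _ hs1
    rw [condZ_zero_succ] at hs1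
    exact absurd hs1 (lt_irrefl 0)
  | succ ℓ ih =>
    intro p hp0 htp2 φ hφ s hs hs1
    have hp0t : ∀ (i : Fin ℓ) t, 0 ≤ Fin.tail p i t := fun i t => hp0 i.succ t
    have htp2t : ∀ i : Fin ℓ, TP2N (Fin.tail p i) := fun i => htp2 i.succ
    set q : ℕ → ℝ := fun t => condZ ℓ t (Fin.tail p) with hqdef
    have hq0 : ∀ t, 0 ≤ q t := fun t => condZ_nonneg ℓ t (Fin.tail p) hp0t
    have hq2 : TP2N q := condZ_tp2n ℓ (Fin.tail p) hp0t htp2t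
    set a : ℕ → ℝ := fun x => p 0 x * q (s+1-x) with hadef
    set b : ℕ → ℝ := fun x => if x ≤ s then p 0 x * q (s-x) else 0 with hbdef
    set v : ℕ → ℝ := fun x => condExp ℓ (s+1-x) (Fin.tail p) (fun k => φ (Fin.cons x k)) with hvdef
    set u : ℕ → ℝ := fun x => condExp ℓ (s-x) (Fin.tail p) (fun k => φ (Fin.cons x k)) with hudef
    have ha : ∀ x, 0 ≤ a x := fun x => mul_nonneg (hp0 0 x) (hq0 _)
    have hb : ∀ x, 0 ≤ b x := by
      intro x
      rw [hbdef]
      dsimp only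
      split
      · exact mul_nonneg (hp0 0 x) (hq0 _)
      · exact le_refl 0
    have hbN : b (s+1) = 0 := by rw [hbdef]; simp
    -- sums of b without the if
    have hbIco : ∀ y, ∑ t ∈ Finset.Ico y (s+2), b t
        = ∑ t ∈ Finset.Ico y (s+1), p 0 t * q (s-t) := by
      intro y
      rcases le_or_gt y (s+1) with hy | hy
      · rw [Finset.sum_Ico_succ_top hy]
        have : b (s+1) = 0 := hbN
        rw [this, add_zero]
        refine Finset.sum_congr rfl fun t ht => ?_
        rw [Finset.mem_Ico] at ht
        rw [hbdef]
        dsimp only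
        rw [if_pos (by omega)]
      · rw [Finset.Ico_eq_empty (by omega), Finset.Ico_eq_empty (by omega),
          Finset.sum_empty, Finset.sum_empty]
    have hbRange : ∑ t ∈ Finset.range (s+2), b t = ∑ t ∈ Finset.range (s+1), p 0 t * q (s-t) := by
      rw [Finset.range_eq_Ico]
      rw [Finset.range_eq_Ico]; exact hbIco 0
    -- identification of partition sums
    have hZa : ∑ x ∈ Finset.range (s+2), a x = condZ (ℓ+1) (s+1) p := (condZ_succ ℓ (s+1) p).symm
    have hZb : ∑ x ∈ Finset.range (s+2), b x = condZ (ℓ+1) s p := by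
      rw [hbRange]
      exact (condZ_succ ℓ s p).symm
    have hZapos : 0 < ∑ x ∈ Finset.range (s+2), a x := by rw [hZa]; exact hs1
    have hZbpos : 0 < ∑ x ∈ Finset.range (s+2), b x := by rw [hZb]; exact hs
    -- dominance hypotheses
    have hcross : ∀ w t, w ≤ t → a w * b t ≤ a t * b w := by
      intro w t hwt
      rcases le_or_gt t s with ht | ht
      · rw [hadef, hbdef]
        dsimp only
        rw [if_pos ht, if_pos (by omega)]
        have h := hq2 (s-t) (s-w) (by omega)
        rw [show s-t+1 = s+1-t by omega, show s-w+1 = s+1-w by omega] at h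
        calc p 0 w * q (s+1-w) * (p 0 t * q (s-t))
            = (p 0 w * p 0 t) * (q (s-t) * q (s+1-w)) := by ring
          _ ≤ (p 0 w * p 0 t) * (q (s+1-t) * q (s-w)) := by
              refine mul_le_mul_of_nonneg_left ?_ (mul_nonneg (hp0 0 w) (hp0 0 t))
              calc q (s-t) * q (s+1-w) = q (s-t) * q (s+1-w) := rfl
                _ ≤ q (s+1-t) * q (s-w) := h
          _ = p 0 t * q (s+1-t) * (p 0 w * q (s-w)) := by ring
      · have : b t = 0 := by rw [hbdef]; dsimp only; rw [if_neg (by omega)]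
        rw [this, mul_zero]
        exact mul_nonneg (ha t) (hb w)
    have hD1 : ∀ x, (∑ t ∈ Finset.range (s+2), a t) * (∑ t ∈ Finset.Ico x (s+2), b t)
        ≤ (∑ t ∈ Finset.range (s+2), b t) * (∑ t ∈ Finset.Ico x (s+2), a t) :=
      fun x => dom1_abstract a b (s+1) x hcross
    have hD2 : ∀ x, (∑ t ∈ Finset.range (s+2), b t) * (∑ t ∈ Finset.Ico (x+1) (s+2), a t)
        ≤ (∑ t ∈ Finset.range (s+2), a t) * (∑ t ∈ Finset.Ico x (s+2), b t) := by
      intro x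
      rw [hbRange, hbIco x]
      exact dom2_concrete (p 0) q (hp0 0) hq0 (htp2 0) s x
    -- positivity extraction
    have hbpos : ∀ x, 0 < b x → x ≤ s ∧ 0 < p 0 x ∧ 0 < q (s-x) := by
      intro x hx
      have hxs : x ≤ s := by
        by_contra h
        rw [hbdef] at hx
        dsimp only at hx
        rw [if_neg h] at hx
        exact lt_irrefl 0 hx
      rw [hbdef] at hx
      dsimp only at hx
      rw [if_pos hxs] at hx
      refine ⟨hxs, ?_, ?_⟩
      · rcases (hp0 0 x).eq_or_lt with h | h
        · exfalso; rw [← h, zero_mul] at hx; exact lt_irrefl 0 hx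
        · exact h
      · rcases (hq0 (s-x)).eq_or_lt with h | h
        · exfalso; rw [← h, mul_zero] at hx; exact lt_irrefl 0 hx
        · exact h
    have hapos : ∀ x, 0 < a x → 0 < q (s+1-x) := by
      intro x hx
      rcases (hq0 (s+1-x)).eq_or_lt with h | h
      · exfalso
        rw [hadef] at hx
        dsimp only at hx
        rw [← h, mul_zero] at hx
        exact lt_irrefl 0 hx
      · exact h
    -- monotone hypotheses
    have hconsmono : ∀ x : ℕ, Monotone (fun k : Fin ℓ → ℕ => φ (Fin.cons x k)) := by
      intro x k k' hkk
      apply hφ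
      intro i
      refine Fin.cases ?_ ?_ i
      · simp
      · intro j
        simpa using hkk j
    have hm1 : ∀ x, 0 < a x → 0 < b x → u x ≤ v x := by
      intro x hax hbx
      obtain ⟨hxs, _, hqs⟩ := hbpos x hbx
      have hqs1 := hapos x hax
      have := ih (Fin.tail p) hp0t htp2t (fun k => φ (Fin.cons x k)) (hconsmono x)
        (s-x) hqs (by rw [show s-x+1 = s+1-x by omega]; exact hqs1)
      rw [hudef, hvdef]
      dsimp only
      rw [show s-x+1 = s+1-x by omega] at this
      exact this
    have hm2 : ∀ x, 0 < a (x+1) → 0 < b x → u x ≤ v (x+1) := by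
      intro x _ hbx
      obtain ⟨hxs, _, hqs⟩ := hbpos x hbx
      rw [hudef, hvdef]
      dsimp only
      rw [show s+1-(x+1) = s-x by omega]
      rw [condExp_eq, condExp_eq]
      have hnum : numer ℓ (s-x) (Fin.tail p) (fun k => φ (Fin.cons x k))
          ≤ numer ℓ (s-x) (Fin.tail p) (fun k => φ (Fin.cons (x+1) k)) := by
        refine Finset.sum_le_sum fun k _ => ?_
        refine mul_le_mul_of_nonneg_left ?_ (Finset.prod_nonneg fun i _ => hp0t i _)
        apply hφ
        intro i
        refine Fin.cases ?_ ?_ i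
        · simp
        · intro j; simp
      have hq' : (0:ℝ) < condZ ℓ (s-x) (Fin.tail p) := hqs
      rw [div_le_div_iff₀ hq' hq']
      exact mul_le_mul_of_nonneg_right hnum (le_of_lt hq')
    -- numerator identifications
    have hnum_s1 : numer (ℓ+1) (s+1) p φ = ∑ x ∈ Finset.range (s+2), a x * v x := by
      rw [numer_succ]
      refine Finset.sum_congr rfl fun x hx => ?_
      rw [hadef, hvdef]
      dsimp only
      rw [condExp_eq]
      exact (cancel_helper (p 0 x) (q (s+1-x)) _ (hq0 _)
        (fun hz => numer_vanish ℓ (s+1-x) (Fin.tail p) _ hp0t hz)).symm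
    have hnum_s : numer (ℓ+1) s p φ = ∑ x ∈ Finset.range (s+2), b x * u x := by
      rw [numer_succ]
      rw [Finset.sum_range_succ (fun x => b x * u x) (s+1)]
      rw [hbN, zero_mul, add_zero]
      refine Finset.sum_congr rfl fun x hx => ?_
      rw [Finset.mem_range] at hx
      rw [hbdef, hudef]
      dsimp only
      rw [if_pos (by omega), condExp_eq]
      exact (cancel_helper (p 0 x) (q (s-x)) _ (hq0 _)
        (fun hz => numer_vanish ℓ (s-x) (Fin.tail p) _ hp0t hz)).symm
    calc condExp (ℓ+1) s p φ
        = (∑ x ∈ Finset.range (s+2), b x * u x) / (∑ x ∈ Finset.range (s+2), b x) := by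
          rw [condExp_eq, hnum_s, hZb]
      _ ≤ (∑ x ∈ Finset.range (s+2), a x * v x) / (∑ x ∈ Finset.range (s+2), a x) :=
          key_coupling (s+1) a b v u ha hb hbN hZapos hZbpos hD1 hD2 hm1 hm2
      _ = condExp (ℓ+1) (s+1) p φ := by
          rw [condExp_eq, hnum_s1, hZa]


/-- Efron-type monotonicity for lattice variables: if `V₁,…,V_ℓ` are
independent `ℤ₊`-valued log-concave random variables, each with interval support
containing `0`, and `φ` is bounded and nondecreasing in each coordinate, then for every
`s` with `P(S_ℓ = s) > 0` and `P(S_ℓ = s+1) > 0`,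
`E(φ(V₁,…,V_ℓ) | S_ℓ = s) ≤ E(φ(V₁,…,V_ℓ) | S_ℓ = s+1)`. -/
theorem stmt5 (ℓ : ℕ) (p : Fin ℓ → ℕ → ℝ)
    (hp0 : ∀ i s, 0 ≤ p i s) (hp1 : ∀ i, ∑' s, p i s = 1)
    (hlc : ∀ i, ∀ s : ℕ, 1 ≤ s → p i s ^ 2 ≥ p i (s - 1) * p i (s + 1))
    (hzero : ∀ i, 0 < p i 0)
    (hint : ∀ i, ∀ s t : ℕ, t ≤ s → 0 < p i s → 0 < p i t)
    (φ : (Fin ℓ → ℕ) → ℝ) (hφ : Monotone φ) (hφbdd : ∃ C, ∀ k, |φ k| ≤ C)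
    (s : ℕ) (hs : 0 < condZ ℓ s p) (hs1 : 0 < condZ ℓ (s + 1) p) :
    condExp ℓ s p φ ≤ condExp ℓ (s + 1) p φ := by
  exact master ℓ p hp0 (fun i => tp2n_of_lc (p i) (hp0 i) (hlc i) (hint i)) φ hφ s hs hs1
end

section
/- Let K₀, …, K_{ℓ−1} be independent {0,1}-valued random variables with P(K_i = 1) = p_i ∈ (0,1), let S = Σ_{i=0}^{ℓ−1} K_i and S_i = S − K_i, and let n be an integer with 0 ≤ n ≤ ℓ. Then H(K₀, …, K_{ℓ−1} | S = n) − H(K₀, …, K_{ℓ−1}) = Σ_{i=0}^{ℓ−1} Σ_{k∈{0,1}} ( P(K_i = k) − P(K_i = k) P(S_i = n−k)/P(S = n) ) log P(K_i = k) + log P(S = n). -/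
/-- The probability that a string of independent `{0,1}`-valued random variables,
where the `i`-th has success probability `p i`, takes the value `x`. -/
noncomputable def bernProb {ℓ : ℕ} (p : Fin ℓ → ℝ) (x : Fin ℓ → Bool) : ℝ :=
  ∏ i, if x i then p i else 1 - p i

/-- The number of ones in the binary string `x`. -/
def onesCount {ℓ : ℕ} (x : Fin ℓ → Bool) : ℕ :=
  (Finset.univ.filter (fun i => x i = true)).card

/-- `P(S = n)` where `S = Σᵢ Kᵢ` is the sum of the independent `{0,1}`-valued variables. -/
noncomputable def probSum {ℓ : ℕ} (p : Fin ℓ → ℝ) (n : ℕ) : ℝ :=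
  ∑ x : Fin ℓ → Bool, if onesCount x = n then bernProb p x else 0

/-- `P(S_i = m)` where `S_i = S − K_i` is the sum of all the variables except `K_i`. -/
noncomputable def probSumWithout {ℓ : ℕ} (p : Fin ℓ → ℝ) (i : Fin ℓ) (m : ℕ) : ℝ :=
  ∑ x : Fin ℓ → Bool,
    if (Finset.univ.filter (fun j => x j = true ∧ j ≠ i)).card = m then bernProb p x else 0

/-- Shannon entropy `H(K₀, …, K_{ℓ-1})` of the joint distribution. -/
noncomputable def entJoint {ℓ : ℕ} (p : Fin ℓ → ℝ) : ℝ :=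
  -∑ x : Fin ℓ → Bool, bernProb p x * Real.log (bernProb p x)

/-- Shannon entropy `H(K₀, …, K_{ℓ-1} | S = n)` of the conditional distribution
given that the sum of the variables equals `n`. -/
noncomputable def entCond {ℓ : ℕ} (p : Fin ℓ → ℝ) (n : ℕ) : ℝ :=
  -∑ x : Fin ℓ → Bool, if onesCount x = n then
      (bernProb p x / probSum p n) * Real.log (bernProb p x / probSum p n) else 0

namespace S19
open Finset
variable {ℓ : ℕ} (p : Fin ℓ → ℝ)

noncomputable def wgt (i : Fin ℓ) (b : Bool) : ℝ := if b then p i else 1 - p i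
noncomputable def bern (x : Fin ℓ → Bool) : ℝ := ∏ i, wgt p i (x i)
noncomputable def bernNe (i : Fin ℓ) (x : Fin ℓ → Bool) : ℝ :=
  ∏ j ∈ univ.erase i, wgt p j (x j)
def countNe (i : Fin ℓ) (x : Fin ℓ → Bool) : ℕ :=
  (Finset.univ.filter (fun j => x j = true ∧ j ≠ i)).card

lemma wgt_pos (hp : ∀ i, p i ∈ Set.Ioo (0:ℝ) 1) (i : Fin ℓ) (b : Bool) : 0 < wgt p i b := by
  cases b <;> simp [wgt] <;> [linarith [(hp i).2]; exact (hp i).1]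

lemma wgt_sum (i : Fin ℓ) : wgt p i true + wgt p i false = 1 := by simp [wgt]

lemma bern_pos (hp : ∀ i, p i ∈ Set.Ioo (0:ℝ) 1) (x : Fin ℓ → Bool) : 0 < bern p x :=
  Finset.prod_pos fun i _ => wgt_pos p hp i (x i)

lemma log_bern (hp : ∀ i, p i ∈ Set.Ioo (0:ℝ) 1) (x : Fin ℓ → Bool) :
    Real.log (bern p x) = ∑ i, Real.log (wgt p i (x i)) :=
  Real.log_prod (fun i _ => (wgt_pos p hp i (x i)).ne')

lemma sum_bern : ∑ x : Fin ℓ → Bool, bern p x = 1 := by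
  have : ∀ x : Fin ℓ → Bool, bern p x = ∏ i, wgt p i (x i) := fun _ => rfl
  simp_rw [this]
  rw [← Fintype.prod_sum (fun i b => wgt p i b)]
  simp [wgt]

def flip (i : Fin ℓ) : (Fin ℓ → Bool) → (Fin ℓ → Bool) :=
  fun x => Function.update x i (!x i)

lemma flip_involutive (i : Fin ℓ) : Function.Involutive (flip (ℓ := ℓ) i) := by
  intro x; funext j
  by_cases h : j = i <;> simp [flip, Function.update, h]

lemma sum_update (i : Fin ℓ) (b : Bool) (H : (Fin ℓ → Bool) → ℝ) :
    ∑ x : Fin ℓ → Bool, H (Function.update x i b) =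
      2 * ∑ x : Fin ℓ → Bool, (if x i = b then H x else 0) := by
  have key : ∀ x : Fin ℓ → Bool, H (Function.update x i b) =
      (if x i = b then H x else 0) + (if (flip i x) i = b then H (flip i x) else 0) := by
    intro x
    by_cases h : x i = b
    · have h2 : (flip i x) i = !b := by simp [flip, h]
      have : Function.update x i b = x := by
        funext j; by_cases hj : j = i <;> simp [Function.update, hj, ← h]
      rw [this]; simp [h, h2]
    · have hxi : x i = !b := by cases b <;> cases hx : x i <;> simp_all
      have h2 : (flip i x) i = b := by simp [flip, hxi]
      have h3 : flip i x = Function.update x i b := by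
        funext j; by_cases hj : j = i <;> simp [flip, Function.update, hj, hxi]
      simp [h, h2, h3]
  calc ∑ x : Fin ℓ → Bool, H (Function.update x i b)
      = ∑ x : Fin ℓ → Bool, ((if x i = b then H x else 0)
          + (if (flip i x) i = b then H (flip i x) else 0)) :=
        Finset.sum_congr rfl fun x _ => key x
    _ = (∑ x : Fin ℓ → Bool, (if x i = b then H x else 0))
          + ∑ x : Fin ℓ → Bool, (if (flip i x) i = b then H (flip i x) else 0) :=
        Finset.sum_add_distrib
    _ = 2 * ∑ x : Fin ℓ → Bool, (if x i = b then H x else 0) := by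
        have := Equiv.sum_comp ((flip_involutive (ℓ := ℓ) i).toPerm)
          (fun x => if x i = b then H x else 0)
        simp only [Function.Involutive.coe_toPerm] at this
        rw [two_mul]; congr 1

lemma bern_eq (i : Fin ℓ) (x : Fin ℓ → Bool) :
    bern p x = wgt p i (x i) * bernNe p i x :=
  (Finset.mul_prod_erase univ _ (mem_univ i)).symm

lemma bernNe_update (i : Fin ℓ) (b : Bool) (x : Fin ℓ → Bool) :
    bernNe p i (Function.update x i b) = bernNe p i x := by
  apply Finset.prod_congr rfl
  intro j hj
  rw [Function.update_of_ne (Finset.ne_of_mem_erase hj)]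

lemma bern_update (i : Fin ℓ) (b : Bool) (x : Fin ℓ → Bool) :
    bern p (Function.update x i b) = wgt p i b * bernNe p i x := by
  rw [bern_eq p i, Function.update_self, bernNe_update]

lemma countNe_update (i : Fin ℓ) (b : Bool) (x : Fin ℓ → Bool) :
    countNe i (Function.update x i b) = countNe i x := by
  unfold countNe
  congr 1
  apply Finset.filter_congr
  intro j _
  by_cases h : j = i <;> simp [h, Function.update_of_ne]

lemma onesCount_eq (i : Fin ℓ) (x : Fin ℓ → Bool) :
    (Finset.univ.filter (fun j => x j = true)).card
      = countNe i x + (if x i then 1 else 0) := by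
  classical
  unfold countNe
  have h1 := Finset.card_filter_add_card_filter_not
    (s := univ.filter (fun j => x j = true)) (p := fun j => j ≠ i)
  simp only [Finset.filter_filter, not_ne_iff] at h1
  have h2 : univ.filter (fun j => x j = true ∧ j = i) = if x i then {i} else ∅ := by
    ext j
    by_cases hj : j = i
    · subst hj; cases hxj : x j <;> simp [hxj]
    · cases hxi : x i <;> simp [hj, hxi]
  rw [h2, apply_ite Finset.card, Finset.card_singleton, Finset.card_empty] at h1
  omega

/-- `P(Sᵢ = m)` in local notation. -/
noncomputable def psw (i : Fin ℓ) (m : ℕ) : ℝ :=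
  ∑ x : Fin ℓ → Bool, if countNe i x = m then bern p x else 0

noncomputable def Tq (i : Fin ℓ) (m : ℕ) : ℝ :=
  ∑ x : Fin ℓ → Bool, if countNe i x = m then bernNe p i x else 0

lemma sum_split {ℓ' : ℕ} (i : Fin ℓ') (f : (Fin ℓ' → Bool) → ℝ) :
    ∑ x : Fin ℓ' → Bool, f x =
      (∑ x : Fin ℓ' → Bool, if x i = true then f x else 0)
      + ∑ x : Fin ℓ' → Bool, if x i = false then f x else 0 := by
  rw [← Finset.sum_add_distrib]
  apply Finset.sum_congr rfl
  intro x _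
  cases h : x i <;> simp [h]

lemma sum_cond (i : Fin ℓ) (b : Bool) (m : ℕ) :
    ∑ x : Fin ℓ → Bool, (if x i = b then (if countNe i x = m then bern p x else 0) else 0)
      = wgt p i b * Tq p i m / 2 := by
  have h := sum_update (ℓ := ℓ) i b (fun x => if countNe i x = m then bern p x else 0)
  have h2 : ∀ x : Fin ℓ → Bool,
      (if countNe i (Function.update x i b) = m then bern p (Function.update x i b) else 0)
        = wgt p i b * (if countNe i x = m then bernNe p i x else 0) := by
    intro x
    rw [countNe_update, bern_update]
    by_cases hc : countNe i x = m <;> simp [hc]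
  simp only [h2] at h
  rw [← Finset.mul_sum] at h
  have : (wgt p i b * Tq p i m) = 2 * ∑ x : Fin ℓ → Bool,
      (if x i = b then (if countNe i x = m then bern p x else 0) else 0) := h
  linarith

lemma psw_eq (i : Fin ℓ) (m : ℕ) : psw p i m = Tq p i m / 2 := by
  have hdef : psw p i m = ∑ x : Fin ℓ → Bool, if countNe i x = m then bern p x else 0 := rfl
  rw [hdef, sum_split i, sum_cond, sum_cond]
  have hw := wgt_sum p i
  field_simp
  linear_combination Tq p i m * hw

/-- Master marginal lemma. -/
lemma marginal (i : Fin ℓ) (b : Bool) (m : ℕ) :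
    ∑ x : Fin ℓ → Bool, (if countNe i x = m ∧ x i = b then bern p x else 0)
      = wgt p i b * psw p i m := by
  have h1 : ∀ x : Fin ℓ → Bool,
      (if countNe i x = m ∧ x i = b then bern p x else 0)
        = (if x i = b then (if countNe i x = m then bern p x else 0) else 0) := by
    intro x
    by_cases h : x i = b <;> by_cases hc : countNe i x = m <;> simp [h, hc]
  simp only [h1]
  rw [sum_cond, psw_eq]
  ring

lemma sum_bernNe (i : Fin ℓ) : ∑ x : Fin ℓ → Bool, bernNe p i x = 2 := by
  have h := sum_update (ℓ := ℓ) i true (bern p)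
  have h' := sum_update (ℓ := ℓ) i false (bern p)
  simp only [bern_update] at h h'
  rw [← Finset.mul_sum] at h h'
  have hs := sum_split i (bern p)
  rw [sum_bern] at hs
  have hw := wgt_sum p i
  nlinarith [hs, h, h', hw]

lemma marginal_one (i : Fin ℓ) (b : Bool) :
    ∑ x : Fin ℓ → Bool, (if x i = b then bern p x else 0) = wgt p i b := by
  have h := sum_update (ℓ := ℓ) i b (bern p)
  simp only [bern_update] at h
  rw [← Finset.mul_sum, sum_bernNe] at h
  linarith

lemma joint_sum (hp : ∀ i, p i ∈ Set.Ioo (0:ℝ) 1) :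
    ∑ x : Fin ℓ → Bool, bern p x * Real.log (bern p x)
      = ∑ i, (p i * Real.log (p i) + (1 - p i) * Real.log (1 - p i)) := by
  have h1 : ∀ x : Fin ℓ → Bool, bern p x * Real.log (bern p x)
      = ∑ i, bern p x * Real.log (wgt p i (x i)) := by
    intro x; rw [log_bern p hp, Finset.mul_sum]
  simp_rw [h1]
  rw [Finset.sum_comm]
  apply Finset.sum_congr rfl
  intro i _
  have h2 : ∀ x : Fin ℓ → Bool, bern p x * Real.log (wgt p i (x i))
      = (if x i = true then bern p x else 0) * Real.log (p i)
        + (if x i = false then bern p x else 0) * Real.log (1 - p i) := by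
    intro x; cases h : x i <;> simp [h, wgt]
  simp_rw [h2]
  rw [Finset.sum_add_distrib, ← Finset.sum_mul, ← Finset.sum_mul,
    marginal_one, marginal_one]
  simp [wgt]

lemma cond_sum (hp : ∀ i, p i ∈ Set.Ioo (0:ℝ) 1) (n : ℕ) :
    ∑ x : Fin ℓ → Bool,
        (if (Finset.univ.filter (fun j => x j = true)).card = n
          then bern p x * Real.log (bern p x) else 0)
      = ∑ i, ((p i * (if 1 ≤ n then psw p i (n-1) else 0)) * Real.log (p i)
          + ((1 - p i) * psw p i n) * Real.log (1 - p i)) := by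
  have h1 : ∀ x : Fin ℓ → Bool,
      (if (Finset.univ.filter (fun j => x j = true)).card = n
          then bern p x * Real.log (bern p x) else 0)
        = ∑ i, (if (Finset.univ.filter (fun j => x j = true)).card = n
            then bern p x * Real.log (wgt p i (x i)) else 0) := by
    intro x
    by_cases h : (Finset.univ.filter (fun j => x j = true)).card = n
    · simp only [if_pos h, log_bern p hp, Finset.mul_sum]
    · simp [h]
  simp_rw [h1]
  rw [Finset.sum_comm]
  apply Finset.sum_congr rfl
  intro i _
  by_cases h1n : 1 ≤ n
  · have h2 : ∀ x : Fin ℓ → Bool,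
        (if (Finset.univ.filter (fun j => x j = true)).card = n
            then bern p x * Real.log (wgt p i (x i)) else 0)
          = (if countNe i x = n - 1 ∧ x i = true then bern p x else 0) * Real.log (p i)
            + (if countNe i x = n ∧ x i = false then bern p x else 0) * Real.log (1 - p i) := by
      intro x
      rw [onesCount_eq i x]
      cases hx : x i
      · by_cases hc : countNe i x = n <;> simp [hx, hc, wgt]
      · have : (countNe i x + if true = true then 1 else 0) = n ↔ countNe i x = n - 1 := by
          simp; omega
        rw [if_congr this rfl rfl]
        by_cases hc : countNe i x = n - 1 <;> simp [hx, hc, wgt]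
    simp_rw [h2]
    rw [Finset.sum_add_distrib, ← Finset.sum_mul, ← Finset.sum_mul,
      marginal, marginal]
    simp [wgt, h1n]
  · have hn0 : n = 0 := by omega
    subst hn0
    have h2 : ∀ x : Fin ℓ → Bool,
        (if (Finset.univ.filter (fun j => x j = true)).card = 0
            then bern p x * Real.log (wgt p i (x i)) else 0)
          = (if countNe i x = 0 ∧ x i = false then bern p x else 0) * Real.log (1 - p i) := by
      intro x
      rw [onesCount_eq i x]
      cases hx : x i
      · by_cases hc : countNe i x = 0 <;> simp [hx, hc, wgt]
      · simp [hx]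
    simp_rw [h2]
    rw [← Finset.sum_mul, marginal]
    simp [wgt]

end S19

open Finset in
/-- for independent `{0,1}`-valued `K₀,…,K_{ℓ−1}` with
`P(Kᵢ=1) = pᵢ ∈ (0,1)`, `S = ΣKᵢ`, `Sᵢ = S − Kᵢ` and `0 ≤ n ≤ ℓ`:
`H(K | S=n) − H(K) = Σᵢ Σ_{k∈{0,1}} (P(Kᵢ=k) − P(Kᵢ=k)P(Sᵢ=n−k)/P(S=n)) log P(Kᵢ=k)
  + log P(S=n)`,
with the convention `P(Sᵢ = n−k) = 0` when `n − k < 0`. -/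
theorem stmt19 (ℓ : ℕ) (p : Fin ℓ → ℝ) (hp : ∀ i, p i ∈ Set.Ioo (0:ℝ) 1)
    (n : ℕ) (hn : n ≤ ℓ) :
    entCond p n - entJoint p =
      (∑ i, (((1 - p i) - (1 - p i) * probSumWithout p i n / probSum p n) *
          Real.log (1 - p i) +
        ((p i) - (p i) * (if 1 ≤ n then probSumWithout p i (n - 1) else 0) / probSum p n) *
          Real.log (p i))) +
      Real.log (probSum p n) := by
  classical
  have hqpos : ∀ x : Fin ℓ → Bool, 0 < bernProb p x := fun x => S19.bern_pos p hp x
  -- positivity of probSum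
  have hP : 0 < probSum p n := by
    rw [probSum]
    apply Finset.sum_pos'
    · intro x _
      by_cases h : onesCount x = n
      · rw [if_pos h]; exact (hqpos x).le
      · rw [if_neg h]
    · refine ⟨fun j => decide ((j:ℕ) < n), Finset.mem_univ _, ?_⟩
      have hcard : onesCount (fun j : Fin ℓ => decide ((j:ℕ) < n)) = n := by
        unfold onesCount
        have hfil : Finset.univ.filter (fun j : Fin ℓ => decide ((j:ℕ) < n) = true)
            = Finset.univ.filter (fun j : Fin ℓ => (j:ℕ) < n) := by
          apply Finset.filter_congr; intro j _; simp
        rw [hfil]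
        have h : Finset.univ.filter (fun j : Fin ℓ => (j:ℕ) < n)
            = (univ : Finset (Fin n)).map (Fin.castLEEmb hn) := by
          ext j
          simp [Fin.castLEEmb, Fin.ext_iff]
          constructor
          · intro hj; exact ⟨⟨j, hj⟩, rfl⟩
          · rintro ⟨a, ha⟩; rw [← ha]; exact a.2
        rw [h, Finset.card_map]; simp
      rw [if_pos hcard]; exact hqpos _
  set P := probSum p n with hPdef
  have hPne : P ≠ 0 := hP.ne'
  -- rewrite entCond
  have hsumn : ∑ x : Fin ℓ → Bool, (if onesCount x = n then bernProb p x else 0) = P := rfl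
  have hcond : entCond p n
      = -(P⁻¹ * ∑ x : Fin ℓ → Bool,
          (if onesCount x = n then bernProb p x * Real.log (bernProb p x) else 0))
        + Real.log P := by
    rw [entCond, ← hPdef]
    have h1 : ∀ x : Fin ℓ → Bool,
        (if onesCount x = n then
          (bernProb p x / P) * Real.log (bernProb p x / P) else 0)
        = P⁻¹ * (if onesCount x = n then bernProb p x * Real.log (bernProb p x) else 0)
          - (if onesCount x = n then bernProb p x else 0) * (Real.log P / P) := by
      intro x
      by_cases h : onesCount x = n
      · rw [if_pos h, if_pos h, if_pos h,
          Real.log_div (hqpos x).ne' hPne]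
        field_simp
      · simp [h]
    simp_rw [h1]
    rw [Finset.sum_sub_distrib, ← Finset.mul_sum, ← Finset.sum_mul, hsumn]
    have h2 : P * (Real.log P / P) = Real.log P := by field_simp
    rw [h2]; ring
  have hjoint : entJoint p
      = -∑ i, (p i * Real.log (p i) + (1 - p i) * Real.log (1 - p i)) := by
    rw [entJoint]
    congr 1
    exact S19.joint_sum p hp
  have hcsum : ∑ x : Fin ℓ → Bool,
      (if onesCount x = n then bernProb p x * Real.log (bernProb p x) else 0)
      = ∑ i, ((p i * (if 1 ≤ n then S19.psw p i (n-1) else 0)) * Real.log (p i)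
          + ((1 - p i) * S19.psw p i n) * Real.log (1 - p i)) :=
    S19.cond_sum p hp n
  have hpswEq : ∀ (i : Fin ℓ) (m : ℕ), probSumWithout p i m = S19.psw p i m := fun _ _ => rfl
  rw [hcond, hjoint, hcsum]
  simp_rw [hpswEq]
  have hre : (∑ i, (((1 - p i) - (1 - p i) * S19.psw p i n / P) * Real.log (1 - p i) +
        ((p i) - (p i) * (if 1 ≤ n then S19.psw p i (n - 1) else 0) / P) * Real.log (p i)))
      = ∑ i, ((p i * Real.log (p i) + (1 - p i) * Real.log (1 - p i))
          - P⁻¹ * ((p i * (if 1 ≤ n then S19.psw p i (n-1) else 0)) * Real.log (p i)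
            + ((1 - p i) * S19.psw p i n) * Real.log (1 - p i))) := by
    apply Finset.sum_congr rfl
    intro i _
    ring
  rw [hre, Finset.sum_sub_distrib, ← Finset.mul_sum]
  ring
end
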